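/- Let n ≥ 2 and let T be a semistandard Young tableau of some partition shape with entries in {1,…,2n} whose reading word has dominant restriction; form res(T) by replacing each entry w > n by the barred letter \overline{2n+1−w}. Call a column of res(T) standard if its entries, read from the top, are 1, 2, …, k for some k. If D is the rightmost column of res(T) that is not standard, then there is an integer s ≥ 1 such that the topmost s entries of D are 1, 2, …, s, all entries of D below these are barred letters, and every such barred entry \overline{l} satisfies l ≤ s. -/

import Mathlib

/-- Component `j` (0-indexed, `j < n`) of the vector in `ℤ^n` assigned to the letter
`i ∈ {1,…,2n}`: the letter `i` is sent to the standard basis vector `e_i` if `1 ≤ i ≤ n`,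
and to `−e_{2n+1−i}` if `n < i ≤ 2n`. -/
def letterVec (n i j : ℕ) : ℤ :=
  (if i = j + 1 then 1 else 0) - (if i + j = 2 * n then 1 else 0)

/-- Component `j` (0-indexed) of the sum of the vectors assigned to the letters of `w`. -/
def resSum (n : ℕ) (w : List ℕ) (j : ℕ) : ℤ :=
  (w.map fun i => letterVec n i j).sum

/-- A word `w` over `{1,…,2n}` has *dominant restriction* if every partial sum `p` of the
assigned vectors (over prefixes of `w`) satisfies `p 0 ≥ p 1 ≥ ⋯ ≥ p (n-1) ≥ 0`. -/
def DominantRes (n : ℕ) (w : List ℕ) : Prop :=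
  ∀ k : ℕ,
    (∀ j : ℕ, j + 1 < n → resSum n (w.take k) (j + 1) ≤ resSum n (w.take k) j) ∧
    0 ≤ resSum n (w.take k) (n - 1)

/-- A word over the positive integers is a *lattice word* if every prefix contains,
for each `i ≥ 1`, at least as many letters `i` as letters `i+1`. -/
def IsLatticeWord (w : List ℕ) : Prop :=
  ∀ k i : ℕ, 1 ≤ i → (w.take k).count (i + 1) ≤ (w.take k).count i

/-- The entries of row `r` (0-indexed) of `T` lying in the skew shape `lam/nu`,
read from right to left. -/
def skewRowWord (T : ℕ → ℕ → ℕ) (nu lam : ℕ → ℕ) (r : ℕ) : List ℕ :=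
  ((List.range' (nu r) (lam r - nu r)).map (T r)).reverse

/-- The reading word (rows right to left, top row to bottom row) of a skew tableau
whose rows are `0, …, k-1`. -/
def skewReadingWord (T : ℕ → ℕ → ℕ) (nu lam : ℕ → ℕ) (k : ℕ) : List ℕ :=
  ((List.range k).map (skewRowWord T nu lam)).flatten

/-- `T` is a skew semistandard tableau of shape `lam/nu`: entries are positive,
rows weakly increase from left to right, and columns strictly increase from top to bottom.
Rows are indexed `0, 1, 2, …` from the top and columns `0, 1, 2, …` from the left;
the cells of row `r` are the `c` with `nu r ≤ c < lam r`. -/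
def IsSkewSSYT (T : ℕ → ℕ → ℕ) (nu lam : ℕ → ℕ) : Prop :=
  (∀ r c, nu r ≤ c → c < lam r → 1 ≤ T r c) ∧
  (∀ r c c', nu r ≤ c → c ≤ c' → c' < lam r → T r c ≤ T r c') ∧
  (∀ r r' c, r < r' → nu r ≤ c → c < lam r → nu r' ≤ c → c < lam r' → T r c < T r' c)

/-- `T` is a semistandard Young tableau of (straight) shape `lam` with entries
in `{1, …, N}`. -/
def IsSSYT (T : ℕ → ℕ → ℕ) (lam : ℕ → ℕ) (N : ℕ) : Prop :=
  IsSkewSSYT T (fun _ => 0) lam ∧ ∀ r c, c < lam r → T r c ≤ N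

/-- The reading word of a straight-shape tableau with rows `0, …, k-1`. -/
def readingWord (T : ℕ → ℕ → ℕ) (lam : ℕ → ℕ) (k : ℕ) : List ℕ :=
  skewReadingWord T (fun _ => 0) lam k

/-- `T` vanishes outside the skew shape `lam/nu` (a normalization used when counting
tableaux, so that a tableau is determined by its entries inside the shape). -/
def ZeroOutside (T : ℕ → ℕ → ℕ) (nu lam : ℕ → ℕ) : Prop :=
  ∀ r c, c < nu r ∨ lam r ≤ c → T r c = 0

/-- The partition with (at most) three rows `a ≥ b ≥ c`, as a row-length function. -/
def shape3 (a b c : ℕ) : ℕ → ℕ :=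
  fun r => if r = 0 then a else if r = 1 then b else if r = 2 then c else 0

/-- `T` is a Littlewood–Richardson tableau of skew shape `lam/nu` and weight `eta`
(with rows `0, …, k-1`): a skew semistandard tableau whose reading word is a lattice
word and which has exactly `eta i` entries equal to `i + 1` for every `i`. -/
def IsLRTableau (T : ℕ → ℕ → ℕ) (nu lam eta : ℕ → ℕ) (k : ℕ) : Prop :=
  IsSkewSSYT T nu lam ∧ IsLatticeWord (skewReadingWord T nu lam k) ∧
    ∀ i : ℕ, (skewReadingWord T nu lam k).count (i + 1) = eta i

/-- The `n`-symplectic Sundaram condition for a tableau of skew shape `lam/nu`, where `l`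
is the length of the longest column of the weight: for each `i ≤ l/2`, the letter `2i+1`
does not occur strictly below row `n + i` (rows counted `1, 2, …` from the top; in the
0-indexed row `r` this means `r ≥ n + i`). -/
def IsSundaram (n l : ℕ) (T : ℕ → ℕ → ℕ) (nu lam : ℕ → ℕ) : Prop :=
  ∀ i : ℕ, i ≤ l / 2 → ∀ r c, n + i ≤ r → nu r ≤ c → c < lam r → T r c ≠ 2 * i + 1
/-- A column `c` of `res(T)` is *standard* if its entries, read from the top, are the
unbarred letters `1, 2, …, k`; in terms of the original tableau `T` (whose entry `w ≤ n`
is the unbarred letter `w` and whose entry `w > n` is the barred letter `2n+1−w`), this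
says that each cell `(r, c)` of the column carries `T r c = r + 1` with `r + 1 ≤ n`. -/
def ColStandard (n : ℕ) (T : ℕ → ℕ → ℕ) (lam : ℕ → ℕ) (c : ℕ) : Prop :=
  ∀ r, c < lam r → T r c = r + 1 ∧ r + 1 ≤ n

/-!
Let `s` be the first row in which column `d` of `res(T)` deviates from `1, 2, …`. Every column to
the right of `d` is standard, so row `s` ends at column `d` and the rows above `s` only contain
the letters `1, …, s`. Hence the reading word starts with a word in `1, …, s` followed by the
letter `b = T s d`, and at that point the coordinates `p_j`, `j ≥ s` (indexed from `0`), of the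
partial sum only see `b`: an unbarred `b ≥ s + 2` gives `p_{b-2} = 0 < 1 = p_{b-1}`, and a barred
`\bar l` with `l > s` gives `p_{l-1} = -1`, below `p_l = 0` (or below `0` if `l = n`). So `b` is a
barred letter `\bar l` with `l ≤ s`, and column strictness pushes the bound down the column.
-/

theorem letterVec_eq_zero {n i j s : ℕ} (hi : i ≤ s) (hsj : s ≤ j) (hj : j < n) :
    letterVec n i j = 0 := by
  unfold letterVec
  split_ifs <;> omega

theorem resSum_append (n : ℕ) (w v : List ℕ) (j : ℕ) :
    resSum n (w ++ v) j = resSum n w j + resSum n v j := by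
  simp [resSum]

theorem resSum_singleton (n i j : ℕ) : resSum n [i] j = letterVec n i j := by
  simp [resSum]

theorem resSum_eq_zero {n s j : ℕ} {w : List ℕ} (hw : ∀ i ∈ w, i ≤ s) (hsj : s ≤ j)
    (hj : j < n) : resSum n w j = 0 :=
  List.sum_eq_zero (by simpa using fun i hi => letterVec_eq_zero (hw i hi) hsj hj)

theorem DominantRes.of_prefix {n : ℕ} {w w' : List ℕ} (h : DominantRes n w) (hw' : w' <+: w) :
    DominantRes n w' := by
  intro k
  rw [List.prefix_iff_eq_take.mp hw', List.take_take]
  exact h _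

theorem DominantRes.le_add_one_or_le_of_append_singleton {n s b : ℕ} {w : List ℕ}
    (h : DominantRes n (w ++ [b])) (hw : ∀ i ∈ w, i ≤ s) :
    b ≤ s + 1 ∨ 2 * n + 1 - s ≤ b := by
  by_contra! hb
  obtain ⟨hmono, hnonneg⟩ := h (w ++ [b]).length
  rw [List.take_length] at hmono hnonneg
  have hp (j : ℕ) (hsj : s ≤ j) (hj : j < n) : resSum n (w ++ [b]) j = letterVec n b j := by
    rw [resSum_append, resSum_eq_zero hw hsj hj, resSum_singleton, zero_add]
  by_cases hbn : b ≤ n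
  · have h' := hmono (b - 2) (by omega)
    rw [hp _ (by omega) (by omega), hp _ (by omega) (by omega)] at h'
    unfold letterVec at h'
    split_ifs at h' <;> omega
  · rcases (show 2 * n - b = n - 1 ∨ 2 * n - b + 1 < n by omega) with hl | hl
    · rw [hp _ (by omega) (by omega)] at hnonneg
      unfold letterVec at hnonneg
      split_ifs at hnonneg <;> omega
    · have h' := hmono (2 * n - b) hl
      rw [hp _ (by omega) (by omega), hp _ (by omega) (by omega)] at h'
      unfold letterVec at h'
      split_ifs at h' <;> omega

section ReadingWord

variable (T : ℕ → ℕ → ℕ) (nu lam : ℕ → ℕ)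

theorem skewReadingWord_succ (k : ℕ) :
    skewReadingWord T nu lam (k + 1) = skewReadingWord T nu lam k ++ skewRowWord T nu lam k := by
  simp [skewReadingWord, List.range_succ]

theorem skewReadingWord_prefix_of_le {m k : ℕ} (h : m ≤ k) :
    skewReadingWord T nu lam m <+: skewReadingWord T nu lam k := by
  induction k, h using Nat.le_induction with
  | base => exact List.prefix_refl _
  | succ k _ ih =>
    rw [skewReadingWord_succ]
    exact ih.trans (List.prefix_append _ _)

theorem mem_skewReadingWord {k i : ℕ} :
    i ∈ skewReadingWord T nu lam k ↔ ∃ r < k, ∃ c, nu r ≤ c ∧ c < lam r ∧ T r c = i := by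
  simp only [skewReadingWord, List.mem_flatten, List.mem_map, List.mem_range, skewRowWord,
    exists_exists_and_eq_and, List.mem_reverse, List.mem_range'_1]
  constructor
  · rintro ⟨r, hr, c, hc, rfl⟩
    exact ⟨r, hr, c, hc.1, by omega, rfl⟩
  · rintro ⟨r, hr, c, hnu, hlam, rfl⟩
    exact ⟨r, hr, c, ⟨hnu, by omega⟩, rfl⟩

theorem singleton_prefix_skewRowWord {r : ℕ} (h : nu r < lam r) :
    [T r (lam r - 1)] <+: skewRowWord T nu lam r := by
  obtain ⟨m, hm⟩ : ∃ m, lam r - nu r = m + 1 := ⟨lam r - nu r - 1, by omega⟩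
  rw [skewRowWord, hm, List.range'_concat, List.map_append, List.reverse_append,
    show lam r - 1 = nu r + 1 * m by omega]
  exact List.prefix_append _ _

theorem readingWord_append_prefix {s k : ℕ} (hsk : s < k) (hs : 0 < lam s) :
    readingWord T lam s ++ [T s (lam s - 1)] <+: readingWord T lam k :=
  ((List.prefix_append_right_inj _).mpr (singleton_prefix_skewRowWord T _ lam hs)).trans
    (by rw [readingWord, ← skewReadingWord_succ]; exact skewReadingWord_prefix_of_le _ _ _ hsk)

end ReadingWord

theorem IsSkewSSYT.add_one_le {T : ℕ → ℕ → ℕ} {lam : ℕ → ℕ}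
    (hT : IsSkewSSYT T (fun _ => 0) lam) (hlam : Antitone lam) {r c : ℕ} (hc : c < lam r) :
    r + 1 ≤ T r c := by
  induction r with
  | zero => exact hT.1 0 c (Nat.zero_le _) hc
  | succ r ih =>
    have hc' : c < lam r := hc.trans_le (hlam r.le_succ)
    have := hT.2.2 r (r + 1) c r.lt_succ_self (Nat.zero_le _) hc' (Nat.zero_le _) hc
    have := ih hc'
    omega

section FirstNonstandardRow

variable {n : ℕ} {T : ℕ → ℕ → ℕ} {lam : ℕ → ℕ} {d s : ℕ}

theorem exists_first_nonstandard_row (hlam : Antitone lam) (h : ¬ ColStandard n T lam d) :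
    ∃ s, d < lam s ∧ ¬ (T s d = s + 1 ∧ s + 1 ≤ n) ∧
      ∀ r < s, T r d = r + 1 ∧ r + 1 ≤ n := by
  have hex : ∃ s, d < lam s ∧ ¬ (T s d = s + 1 ∧ s + 1 ≤ n) := by
    simpa [ColStandard] using h
  refine ⟨Nat.find hex, (Nat.find_spec hex).1, (Nat.find_spec hex).2, fun r hr => ?_⟩
  have hdr : d < lam r := (Nat.find_spec hex).1.trans_le (hlam hr.le)
  have := Nat.find_min hex hr
  tauto

theorem lam_eq_add_one_of_first_nonstandard_row (hT : IsSkewSSYT T (fun _ => 0) lam)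
    (hlam : Antitone lam) (hright : ∀ c, d < c → ColStandard n T lam c) (hds : d < lam s)
    (hbad : ¬ (T s d = s + 1 ∧ s + 1 ≤ n)) :
    lam s = d + 1 := by
  by_contra hne
  have hd1 : d + 1 < lam s := by omega
  obtain ⟨heq, hsn⟩ := hright (d + 1) d.lt_succ_self s hd1
  have := hT.2.1 s d (d + 1) (Nat.zero_le _) d.le_succ hd1
  have := hT.add_one_le hlam hds
  exact hbad ⟨by omega, hsn⟩

theorem le_of_mem_readingWord_of_first_nonstandard_row (hT : IsSkewSSYT T (fun _ => 0) lam)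
    (hlam : Antitone lam) (hright : ∀ c, d < c → ColStandard n T lam c) (hds : d < lam s)
    (habove : ∀ r < s, T r d = r + 1 ∧ r + 1 ≤ n) :
    ∀ i ∈ readingWord T lam s, i ≤ s := by
  intro i hi
  obtain ⟨r, hr, c, -, hc, rfl⟩ := (mem_skewReadingWord T _ lam).mp hi
  rcases le_or_gt c d with hcd | hdc
  · have := hT.2.1 r c d (Nat.zero_le _) hcd (hds.trans_le (hlam hr.le))
    have := (habove r hr).1
    omega
  · have := (hright c hdc r hc).1
    omega

theorem barred_of_first_nonstandard_row {k : ℕ} (hT : IsSSYT T lam (2 * n)) (hlam : Antitone lam)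
    (hk : ∀ r, k ≤ r → lam r = 0) (hdom : DominantRes n (readingWord T lam k))
    (hright : ∀ c, d < c → ColStandard n T lam c) (hds : d < lam s)
    (hbad : ¬ (T s d = s + 1 ∧ s + 1 ≤ n)) (habove : ∀ r < s, T r d = r + 1 ∧ r + 1 ≤ n) :
    n < T s d ∧ 2 * n + 1 - T s d ≤ s := by
  have hlast : lam s - 1 = d := by
    rw [lam_eq_add_one_of_first_nonstandard_row hT.1 hlam hright hds hbad, Nat.add_sub_cancel]
  have hsk : s < k := by
    by_contra! hks
    have := hk s hks
    omega
  have hsn : s ≤ n := by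
    rcases s with _ | s
    · exact Nat.zero_le n
    · exact (habove s s.lt_succ_self).2
  have hprefix := readingWord_append_prefix T lam hsk (by omega)
  rw [hlast] at hprefix
  have hb := (hdom.of_prefix hprefix).le_add_one_or_le_of_append_singleton
    (le_of_mem_readingWord_of_first_nonstandard_row hT.1 hlam hright hds habove)
  have := hT.1.add_one_le hlam hds
  have := hT.2 s d hds
  omega

end FirstNonstandardRow

theorem stmt9_general (n : ℕ) (lam : ℕ → ℕ)
    (hlam : ∀ r, lam (r + 1) ≤ lam r) (k : ℕ) (hk : ∀ r, k ≤ r → lam r = 0)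
    (T : ℕ → ℕ → ℕ) (hT : IsSSYT T lam (2 * n))
    (hdom : DominantRes n (readingWord T lam k))
    (d : ℕ)
    (hdns : ¬ ColStandard n T lam d)
    (hright : ∀ c, d < c → ColStandard n T lam c) :
    ∃ s : ℕ, 1 ≤ s ∧
      (∀ r, r < s → d < lam r ∧ T r d = r + 1 ∧ r + 1 ≤ n) ∧
      (∀ r, s ≤ r → d < lam r → n < T r d ∧ 2 * n + 1 - T r d ≤ s) := by
  have hanti : Antitone lam := antitone_nat_of_succ_le hlam
  obtain ⟨s, hds, hbad, habove⟩ := exists_first_nonstandard_row hanti hdns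
  obtain ⟨hbarred, hbound⟩ :=
    barred_of_first_nonstandard_row hT hanti hk hdom hright hds hbad habove
  have hTsd := hT.2 s d hds
  refine ⟨s, by omega, fun r hr => ⟨hds.trans_le (hanti hr.le), habove r hr⟩, fun r hsr hdr => ?_⟩
  have hcol : T s d ≤ T r d := by
    rcases hsr.eq_or_lt with rfl | hlt
    · exact le_rfl
    · exact (hT.1.2.2 s r d hlt (Nat.zero_le _) hds (Nat.zero_le _) hdr).le
  omega

/-- Let `n ≥ 2` and let `T` be a semistandard Young tableau of some
partition shape with entries in `{1,…,2n}` whose reading word has dominant restriction,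
and form `res(T)` by replacing each entry `w > n` by the barred letter `2n+1−w`. If `d` is
the rightmost column of `res(T)` that is not standard, then there is `s ≥ 1` such that the
topmost `s` entries of column `d` are the unbarred letters `1, 2, …, s` and every entry
below them is a barred letter `l̄` (i.e. `T r d > n` with `l = 2n+1−T r d`) with `l ≤ s`. -/
theorem stmt9 (n : ℕ) (hn : 2 ≤ n) (lam : ℕ → ℕ)
    (hlam : ∀ r, lam (r + 1) ≤ lam r) (k : ℕ) (hk : ∀ r, k ≤ r → lam r = 0)
    (T : ℕ → ℕ → ℕ) (hT : IsSSYT T lam (2 * n))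
    (hdom : DominantRes n (readingWord T lam k))
    (d : ℕ) (hd : d < lam 0)
    (hdns : ¬ ColStandard n T lam d)
    (hright : ∀ c, d < c → ColStandard n T lam c) :
    ∃ s : ℕ, 1 ≤ s ∧
      (∀ r, r < s → d < lam r ∧ T r d = r + 1 ∧ r + 1 ≤ n) ∧
      (∀ r, s ≤ r → d < lam r → n < T r d ∧ 2 * n + 1 - T r d ≤ s) :=
  stmt9_general n lam hlam k hk T hT hdom d hdns hright
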